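/- Let (W,S) be a Coxeter system, I ⊆ S, and w ∈ W^I a fully supported element (S(w) = S) with I nonempty. Then there exist simple reflections s, t ∈ S with s ∈ I such that the product st has length 2 and st is a minimal-length coset representative in W^I with st ≤ w in Bruhat order. Concretely: taking a reduced word w = s₁⋯s_k, letting i be the largest index with s_i ∈ I, there exists j > i such that s_i and s_j do not commute, and then s = s_i, t = s_j work. -/

import Mathlib

open CoxeterSystem Real

noncomputable section

namespace CoxAux

variable {B : Type*} (M : CoxeterMatrix B)

/-- entries of the standard bilinear form -/
def cc (a b : B) : ℝ := - Real.cos (Real.pi / M a b)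

lemma cc_diag (a : B) : cc M a a = 1 := by
  simp [cc, M.diagonal a]

lemma cc_symm (a b : B) : cc M a b = cc M b a := by
  simp [cc, M.symmetric a b]

/-- the linear functional v ↦ B(v, e_a) -/
def phi (a : B) : (B →₀ ℝ) →ₗ[ℝ] ℝ := Finsupp.linearCombination ℝ (fun b => cc M b a)

lemma phi_single (a b : B) : phi M a (Finsupp.single b 1) = cc M b a := by
  simp [phi]

/-- the reflection σ_a -/
def sig (a : B) : Module.End ℝ (B →₀ ℝ) :=
  LinearMap.id - ((2 : ℝ) • (phi M a)).smulRight (Finsupp.single a 1)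

lemma sig_apply (a : B) (v : B →₀ ℝ) :
    sig M a v = v - (2 * phi M a v) • Finsupp.single a 1 := by
  simp only [sig, LinearMap.sub_apply, LinearMap.id_apply, LinearMap.smulRight_apply,
    LinearMap.smul_apply, smul_smul, smul_eq_mul]

lemma phi_sig (a : B) (v : B →₀ ℝ) :
    phi M a (sig M a v) = - phi M a v := by
  rw [sig_apply, map_sub, map_smul, phi_single, cc_diag, smul_eq_mul]
  ring

lemma sig_sq (a : B) : sig M a * sig M a = 1 := by
  apply LinearMap.ext
  intro v
  show sig M a (sig M a v) = v
  rw [sig_apply M a (sig M a v), phi_sig, sig_apply]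
  module

end CoxAux

namespace CoxAux

open Matrix

/-- Chebyshev-style matrix power identity -/
lemma gpow_eq_one {k : ℝ} {m : ℕ} (hm : 3 ≤ m) (hk : k = Real.cos (Real.pi / m)) :
    (!![4*k^2-1, -2*k; 2*k, -1] : Matrix (Fin 2) (Fin 2) ℝ) ^ m = 1 := by
  obtain ⟨g, hg⟩ : ∃ g : Matrix (Fin 2) (Fin 2) ℝ, g = !![4*k^2-1, -2*k; 2*k, -1] := ⟨_, rfl⟩
  rw [← hg]
  have hmpos : (0:ℝ) < m := by positivity
  obtain ⟨θ, hθ⟩ : ∃ θ : ℝ, θ = 2 * (Real.pi / m) := ⟨_, rfl⟩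
  have hcos : Real.cos θ = 2 * k ^ 2 - 1 := by
    rw [hθ, Real.cos_two_mul, hk]
  have hθpos : 0 < θ := by
    have := Real.pi_pos
    rw [hθ]; positivity
  have hm3 : (3:ℝ) ≤ (m:ℝ) := by exact_mod_cast hm
  have hθlt : θ < Real.pi := by
    have h2 : θ = 2 * Real.pi / m := by rw [hθ]; ring
    rw [h2, div_lt_iff₀ hmpos]
    nlinarith [Real.pi_pos]
  have hsin : Real.sin θ ≠ 0 := ne_of_gt (Real.sin_pos_of_pos_of_lt_pi hθpos hθlt)
  have hch : g * g = (2 * Real.cos θ) • g - 1 := by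
    rw [hcos, hg]
    ext i j
    fin_cases i <;> fin_cases j <;>
      simp [Matrix.mul_apply, Fin.sum_univ_two, Matrix.one_apply] <;> ring
  have claim : ∀ n : ℕ, Real.sin θ • g ^ (n+1)
      = Real.sin (((n:ℝ)+1) * θ) • g - Real.sin ((n:ℝ) * θ) • (1 : Matrix (Fin 2) (Fin 2) ℝ) := by
    intro n
    induction n with
    | zero => simp
    | succ n ih =>
      have htrig : Real.sin (((n:ℝ)+1) * θ) * (2 * Real.cos θ) - Real.sin ((n:ℝ) * θ)
          = Real.sin (((n:ℝ)+1+1) * θ) := by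
        have h1 : ((n:ℝ)+1+1) * θ = ((n:ℝ)+1) * θ + θ := by ring
        have h2 : (n:ℝ) * θ = ((n:ℝ)+1) * θ - θ := by ring
        rw [h1, h2, Real.sin_add, Real.sin_sub]
        ring
      have hfix1 : (((n+1:ℕ):ℝ)+1) * θ = ((n:ℝ)+1+1) * θ := by push_cast; ring
      have hfix2 : ((n+1:ℕ):ℝ) * θ = ((n:ℝ)+1) * θ := by push_cast; ring
      rw [hfix1, hfix2]
      calc Real.sin θ • g ^ (n+2) = Real.sin θ • (g ^ (n+1) * g) := by rw [pow_succ]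
        _ = (Real.sin θ • g ^ (n+1)) * g := by rw [smul_mul_assoc]
        _ = (Real.sin (((n:ℝ)+1) * θ) • g - Real.sin ((n:ℝ) * θ) • 1) * g := by rw [ih]
        _ = Real.sin (((n:ℝ)+1) * θ) • (g * g) - Real.sin ((n:ℝ) * θ) • g := by
              rw [sub_mul, smul_mul_assoc, smul_mul_assoc, one_mul]
        _ = Real.sin (((n:ℝ)+1) * θ) • ((2 * Real.cos θ) • g - 1)
              - Real.sin ((n:ℝ) * θ) • g := by rw [hch]
        _ = (Real.sin (((n:ℝ)+1) * θ) * (2 * Real.cos θ) - Real.sin ((n:ℝ) * θ)) • g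
              - Real.sin (((n:ℝ)+1) * θ) • 1 := by
              rw [smul_sub, smul_smul, sub_smul]; abel
        _ = Real.sin (((n:ℝ)+1+1) * θ) • g - Real.sin (((n:ℝ)+1) * θ) • 1 := by rw [htrig]
  have hm1 : (1:ℕ) ≤ m := le_trans (by norm_num) hm
  have hm0 : m - 1 + 1 = m := Nat.succ_pred_eq_of_pos hm1
  have hcast : ((m - 1 : ℕ) : ℝ) = (m : ℝ) - 1 := by
    rw [Nat.cast_sub hm1]
    norm_num
  have hfin := claim (m - 1)
  rw [hm0, hcast] at hfin
  have hmθ : (m : ℝ) * θ = 2 * Real.pi := by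
    rw [hθ]
    field_simp
  have h1 : Real.sin (((m:ℝ) - 1 + 1) * θ) = 0 := by
    rw [show ((m:ℝ) - 1 + 1) = (m:ℝ) by ring, hmθ, Real.sin_two_pi]
  have h2 : Real.sin (((m:ℝ) - 1) * θ) = - Real.sin θ := by
    have hh : ((m:ℝ) - 1) * θ = 2 * Real.pi - θ := by rw [← hmθ]; ring
    rw [hh, Real.sin_sub, Real.sin_two_pi, Real.cos_two_pi]
    ring
  rw [h1, h2] at hfin
  have hfin2 : Real.sin θ • g ^ m = Real.sin θ • (1 : Matrix (Fin 2) (Fin 2) ℝ) := by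
    rw [hfin]
    simp
  exact smul_right_injective _ hsin hfin2


lemma cc_offdiag {B : Type*} (M : CoxeterMatrix B) (a b : B) :
    cc M a b = - Real.cos (Real.pi / M a b) := rfl

section Braid

variable {B : Type*} (M : CoxeterMatrix B)

/-- coordinate embedding of the plane spanned by e_a, e_b -/
def LL (a b : B) : (Fin 2 → ℝ) →ₗ[ℝ] (B →₀ ℝ) :=
  (LinearMap.proj 0).smulRight (Finsupp.single a 1)
    + (LinearMap.proj 1).smulRight (Finsupp.single b 1)

lemma LL_apply (a b : B) (q : Fin 2 → ℝ) :
    LL a b q = q 0 • Finsupp.single a 1 + q 1 • Finsupp.single b 1 := rfl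

lemma sig_fixed (a : B) (v : B →₀ ℝ) (h : phi M a v = 0) : sig M a v = v := by
  rw [sig_apply, h]
  simp

lemma sig_braid (a b : B) (hab : a ≠ b) (hm : 2 ≤ M a b) :
    (sig M a * sig M b) ^ (M a b) = 1 := by
  obtain ⟨k, hk⟩ : ∃ k : ℝ, k = Real.cos (Real.pi / M a b) := ⟨_, rfl⟩
  have hccab : cc M a b = -k := by rw [cc_offdiag, hk, M.symmetric a b]
  have hccba : cc M b a = -k := by rw [← cc_symm, hccab]
  -- bounds on k
  have hmR : (2:ℝ) ≤ (M a b : ℝ) := by exact_mod_cast hm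
  have hpos : (0:ℝ) < Real.pi / M a b := by
    have := Real.pi_pos
    positivity
  have hle : Real.pi / M a b ≤ Real.pi / 2 := by
    apply div_le_div_of_nonneg_left Real.pi_pos.le (by norm_num) hmR
  have hk0 : 0 ≤ k := by
    rw [hk]
    apply Real.cos_nonneg_of_mem_Icc
    constructor
    · linarith
    · linarith
  have hk1 : k < 1 := by
    rw [hk]
    calc Real.cos (Real.pi / M a b) < Real.cos 0 := by
          apply Real.cos_lt_cos_of_nonneg_of_le_pi le_rfl (by linarith [Real.pi_le_four]) hpos
      _ = 1 := Real.cos_zero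
  have hD : (1 : ℝ) - k^2 ≠ 0 := by nlinarith
  -- matrices
  obtain ⟨ga, hga⟩ : ∃ x : Matrix (Fin 2) (Fin 2) ℝ, x = !![-1, 2*k; 0, 1] := ⟨_, rfl⟩
  obtain ⟨gb, hgb⟩ : ∃ x : Matrix (Fin 2) (Fin 2) ℝ, x = !![1, 0; 2*k, -1] := ⟨_, rfl⟩
  have hgab : ga * gb = !![4*k^2-1, -2*k; 2*k, -1] := by
    rw [hga, hgb]
    ext i j
    fin_cases i <;> fin_cases j <;>
      simp [Matrix.mul_apply, Fin.sum_univ_two] <;> ring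
  have hgm : (ga * gb) ^ (M a b) = 1 := by
    rw [hgab]
    rcases eq_or_lt_of_le hm with h2 | h3
    · have hk0' : k = 0 := by
        rw [hk, ← h2]
        norm_num [Real.cos_pi_div_two]
      have : (!![4*k^2-1, -2*k; 2*k, -1] : Matrix (Fin 2) (Fin 2) ℝ)
          = -1 := by
        rw [hk0']
        ext i j
        fin_cases i <;> fin_cases j <;> simp [Matrix.one_apply] <;> norm_num
      rw [this, ← h2]
      norm_num
    · exact gpow_eq_one h3 hk
  -- action of sig on the plane
  have hphiaL : ∀ q : Fin 2 → ℝ, phi M a (LL a b q) = q 0 - k * q 1 := by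
    intro q
    rw [LL_apply, map_add, _root_.map_smul, _root_.map_smul, phi_single, phi_single, cc_diag, hccba]
    simp only [smul_eq_mul]
    ring
  have hphibL : ∀ q : Fin 2 → ℝ, phi M b (LL a b q) = - k * q 0 + q 1 := by
    intro q
    rw [LL_apply, map_add, _root_.map_smul, _root_.map_smul, phi_single, phi_single, cc_diag, hccab]
    simp only [smul_eq_mul]
    ring
  have hLa : ∀ q : Fin 2 → ℝ, sig M a (LL a b q) = LL a b (ga.mulVec q) := by
    intro q
    rw [sig_apply, hphiaL, LL_apply, LL_apply, hga]
    have h0 : (!![-1, 2*k; 0, 1].mulVec q) 0 = -q 0 + 2*k*q 1 := by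
      simp [Matrix.mulVec, dotProduct, Fin.sum_univ_two] <;> ring
    have h1 : (!![-1, 2*k; 0, 1].mulVec q) 1 = q 1 := by
      simp [Matrix.mulVec, dotProduct, Fin.sum_univ_two]
    rw [h0, h1]
    module
  have hLb : ∀ q : Fin 2 → ℝ, sig M b (LL a b q) = LL a b (gb.mulVec q) := by
    intro q
    rw [sig_apply, hphibL, LL_apply, LL_apply, hgb]
    have h0 : (!![1, 0; 2*k, -1].mulVec q) 0 = q 0 := by
      simp [Matrix.mulVec, dotProduct, Fin.sum_univ_two]
    have h1 : (!![1, 0; 2*k, -1].mulVec q) 1 = 2*k*q 0 - q 1 := by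
      simp [Matrix.mulVec, dotProduct, Fin.sum_univ_two] <;> ring
    rw [h0, h1]
    module
  -- main
  apply LinearMap.ext
  intro v
  show ((sig M a * sig M b) ^ M a b) v = v
  obtain ⟨q, hq⟩ : ∃ q : Fin 2 → ℝ,
      q = ![(phi M a v + k * phi M b v)/(1-k^2), (phi M b v + k * phi M a v)/(1-k^2)] :=
    ⟨_, rfl⟩
  have hq0 : q 0 = (phi M a v + k * phi M b v)/(1-k^2) := by rw [hq]; rfl
  have hq1 : q 1 = (phi M b v + k * phi M a v)/(1-k^2) := by rw [hq]; rfl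
  obtain ⟨r, hr⟩ : ∃ r : B →₀ ℝ, r = v - LL a b q := ⟨_, rfl⟩
  have hra : phi M a r = 0 := by
    rw [hr, map_sub, hphiaL, hq0, hq1]
    field_simp
    ring
  have hrb : phi M b r = 0 := by
    rw [hr, map_sub, hphibL, hq0, hq1]
    field_simp
    ring
  have hrfix : ((sig M a * sig M b) ^ M a b) r = r := by
    have h1 : (sig M a * sig M b) r = r := by
      rw [Module.End.mul_apply, sig_fixed M b r hrb, sig_fixed M a r hra]
    rw [Module.End.pow_apply]
    exact Function.iterate_fixed h1 _
  have hplane : ∀ (n : ℕ) (p : Fin 2 → ℝ),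
      ((sig M a * sig M b) ^ n) (LL a b p) = LL a b (((ga * gb) ^ n).mulVec p) := by
    intro n
    induction n with
    | zero => intro p; simp [Matrix.one_mulVec]
    | succ n ih =>
      intro p
      rw [pow_succ', Module.End.mul_apply, ih, Module.End.mul_apply, hLb, hLa,
        Matrix.mulVec_mulVec, Matrix.mulVec_mulVec]
      congr 1
      rw [← pow_succ']
  have hv : v = r + LL a b q := by rw [hr]; abel
  rw [hv, map_add, hrfix, hplane, hgm, Matrix.one_mulVec]

end Braid

lemma isLiftable_sig {B : Type*} (M : CoxeterMatrix B) : M.IsLiftable (sig M) := by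
  intro i j
  rcases eq_or_ne i j with h | h
  · subst h
    rw [M.diagonal, pow_one, sig_sq]
  · rcases Nat.eq_zero_or_pos (M i j) with h0 | hpos
    · rw [h0, pow_zero]
    · have h1 : M i j ≠ 1 := M.off_diagonal i j h
      exact sig_braid M i j h (by omega)

theorem simple_injective {B W : Type*} [Group W] {M : CoxeterMatrix B}
    (cs : CoxeterSystem M W) : Function.Injective cs.simple := by
  intro a b h
  by_contra hab
  have hla := cs.lift_apply_simple (isLiftable_sig M) a
  have hlb := cs.lift_apply_simple (isLiftable_sig M) b
  have hs : sig M a = sig M b := by rw [← hla, ← hlb, h]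
  have h2 : sig M a (Finsupp.single b 1) = sig M b (Finsupp.single b 1) := by rw [hs]
  rw [sig_apply, sig_apply, phi_single, phi_single, cc_diag] at h2
  have h3 := congrArg (fun v : B →₀ ℝ => v b) h2
  simp only [Finsupp.sub_apply, Finsupp.smul_apply, Finsupp.single_eq_same,
    Finsupp.single_eq_of_ne' hab, smul_eq_mul] at h3
  norm_num at h3

end CoxAux

end

noncomputable section
open scoped Classical
namespace CoxAux

variable {W : Type*} [Group W]

/-- exponent-2 function group -/
abbrev NN (W : Type*) := W → Multiplicative (ZMod 2)

lemma NN_sq (g : NN W) : g * g = 1 := by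
  funext t
  show g t * g t = 1
  have h : ∀ x : Multiplicative (ZMod 2), x * x = 1 := by decide
  exact h (g t)

/-- conjugation action of W on NN W -/
def conjAut (w : W) : MulAut (NN W) where
  toFun f := fun t => f (w⁻¹ * t * w)
  invFun f := fun t => f (w * t * w⁻¹)
  left_inv f := by funext t; simp [mul_assoc]
  right_inv f := by funext t; simp [mul_assoc]
  map_mul' f g := rfl

def conjHom : W →* MulAut (NN W) where
  toFun := conjAut
  map_one' := by
    ext f t
    simp [conjAut]
  map_mul' w₁ w₂ := by
    ext f t
    simp [conjAut, mul_assoc]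

/-- indicator function -/
def dd (u : W) : NN W := fun t => if t = u then Multiplicative.ofAdd 1 else 1

lemma conjAut_dd (w u : W) : conjAut w (dd u) = dd (w * u * w⁻¹) := by
  funext t
  show (if w⁻¹ * t * w = u then _ else _) = _
  have : (w⁻¹ * t * w = u) ↔ (t = w * u * w⁻¹) := by
    constructor
    · intro h; rw [← h]; group
    · intro h; rw [h]; group
  rw [dd, if_congr this rfl rfl]


variable {B : Type*} {M : CoxeterMatrix B} (cs : CoxeterSystem M W)

/-- the target group of the cocycle representation -/
abbrev GG (W : Type*) [Group W] := NN W ⋊[conjHom] W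

def FF (i : B) : GG W := ⟨dd (cs.simple i), cs.simple i⟩

/-- parity cocycle of a word -/
def Phi (ω : List B) : NN W := ((cs.leftInvSeq ω).map dd).prod

lemma leftInvSeq_cons (a : B) (ω : List B) :
    cs.leftInvSeq (a :: ω)
      = cs.simple a :: (cs.leftInvSeq ω).map (MulAut.conj (cs.simple a)) := rfl

lemma Phi_cons (a : B) (ω : List B) :
    Phi cs (a :: ω) = dd (cs.simple a) * conjAut (cs.simple a) (Phi cs ω) := by
  rw [Phi, Phi, leftInvSeq_cons, List.map_cons, List.prod_cons]
  congr 1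
  rw [map_list_prod (conjAut (cs.simple a)), List.map_map, List.map_map]
  congr 1
  refine List.map_congr_left fun u _ => ?_
  show dd (MulAut.conj (cs.simple a) u) = conjAut (cs.simple a) (dd u)
  rw [conjAut_dd, MulAut.conj_apply]

lemma prod_map_FF (ω : List B) :
    (ω.map (FF cs)).prod = (⟨Phi cs ω, cs.wordProd ω⟩ : GG W) := by
  induction ω with
  | nil =>
    apply SemidirectProduct.ext <;> simp [Phi, cs.wordProd_nil]
  | cons a ω ih =>
    rw [List.map_cons, List.prod_cons, ih]
    apply SemidirectProduct.ext
    · show dd (cs.simple a) * conjHom (cs.simple a) (Phi cs ω) = Phi cs (a :: ω)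
      rw [Phi_cons]
      rfl
    · show cs.simple a * cs.wordProd ω = cs.wordProd (a :: ω)
      rw [cs.wordProd_cons]


lemma aux_pow (x y : W) (j : ℕ) : (y*x)^(j+1) = y * (x*y)^j * x := by
  induction j with
  | zero => simp
  | succ j ih =>
    calc (y*x)^(j+2) = (y*x) * (y*x)^(j+1) := by rw [← pow_succ']
      _ = y*x*(y * (x*y)^j * x) := by rw [ih]
      _ = y * ((x*y)*(x*y)^j) * x := by simp [mul_assoc]
      _ = y * (x*y)^(j+1) * x := by rw [← pow_succ']

lemma alt_cons2 (i i' : B) (k : ℕ) :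
    CoxeterSystem.alternatingWord i i' (2*(k+1)) = i :: i' :: CoxeterSystem.alternatingWord i i' (2*k) := by
  have h1 : 2*(k+1) = (2*k+1)+1 := by ring
  rw [h1, CoxeterSystem.alternatingWord_succ', CoxeterSystem.alternatingWord_succ']
  rw [if_neg (by simp [Nat.even_add_one, even_two_mul k]), if_pos (even_two_mul k)]

lemma prod_FF_alt (i i' : B) (k : ℕ) :
    ((CoxeterSystem.alternatingWord i i' (2*k)).map (FF cs)).prod = (FF cs i * FF cs i')^k := by
  induction k with
  | zero => simp [CoxeterSystem.alternatingWord]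
  | succ k ih =>
    rw [alt_cons2, List.map_cons, List.map_cons, List.prod_cons, List.prod_cons, ih,
      ← mul_assoc, ← pow_succ']

lemma lis_alt_getD (i i' : B) : ∀ n j, j < n →
    (cs.leftInvSeq (CoxeterSystem.alternatingWord i i' n)).getD j 1
      = if Even n then (cs.simple i * cs.simple i')^j * cs.simple i
        else (cs.simple i' * cs.simple i)^j * cs.simple i' := by
  intro n
  induction n with
  | zero => omega
  | succ n ih =>
    intro j hj
    rw [CoxeterSystem.alternatingWord_succ', leftInvSeq_cons]
    match j with
    | 0 =>
      rw [List.getD_cons_zero]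
      rcases Nat.even_or_odd n with he | ho
      · rw [if_pos he, if_neg (by simp [Nat.even_add_one, he])]
        simp
      · rw [if_neg (by simp [Nat.not_even_iff_odd.mpr ho]),
          if_pos (by simp [Nat.even_add_one, Nat.not_even_iff_odd.mpr ho])]
        simp
    | (j+1) =>
      rw [List.getD_cons_succ]
      have hj' : j < n := by omega
      have hlen : j < ((cs.leftInvSeq (CoxeterSystem.alternatingWord i i' n)).map
          (MulAut.conj (cs.simple (if Even n then i' else i)))).length := by
        simp [CoxeterSystem.length_leftInvSeq, CoxeterSystem.length_alternatingWord]
        omega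
      rw [List.getD_eq_getElem _ _ hlen, List.getElem_map, ← List.getD_eq_getElem _ 1, ih j hj']
      rcases Nat.even_or_odd n with he | ho
      · rw [if_pos he, if_pos he, if_neg (by simp [Nat.even_add_one, he])]
        rw [MulAut.conj_apply, cs.inv_simple]
        rw [aux_pow (cs.simple i) (cs.simple i') j]
        group
      · rw [if_neg (by simp [Nat.not_even_iff_odd.mpr ho]),
          if_neg (by simp [Nat.not_even_iff_odd.mpr ho]),
          if_pos (by simp [Nat.even_add_one, Nat.not_even_iff_odd.mpr ho])]
        rw [MulAut.conj_apply, cs.inv_simple]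
        rw [aux_pow (cs.simple i') (cs.simple i) j]
        group

lemma lis_alt_split (i i' : B) (m : ℕ) (hm : (cs.simple i * cs.simple i')^m = 1) :
    cs.leftInvSeq (CoxeterSystem.alternatingWord i i' (2*m))
      = ((List.range m).map fun j => (cs.simple i * cs.simple i')^j * cs.simple i)
        ++ ((List.range m).map fun j => (cs.simple i * cs.simple i')^j * cs.simple i) := by
  apply List.ext_getElem
  · simp [CoxeterSystem.length_leftInvSeq, CoxeterSystem.length_alternatingWord]
    ring
  · intro j h1 h2
    have hlen : j < 2*m := by
      simpa [CoxeterSystem.length_leftInvSeq, CoxeterSystem.length_alternatingWord] using h1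
    rw [← List.getD_eq_getElem _ 1, lis_alt_getD cs i i' (2*m) j hlen,
      if_pos (even_two_mul m)]
    rcases Nat.lt_or_ge j m with hcase | hcase
    · rw [List.getElem_append_left (by simpa using hcase)]
      simp
    · rw [List.getElem_append_right (by simpa using hcase)]
      simp only [List.length_map, List.length_range, List.getElem_map, List.getElem_range]
      conv_lhs => rw [show j = (j - m) + m from by omega]
      rw [pow_add, hm, mul_one]

lemma Phi_alt (i i' : B) (m : ℕ) (hm : (cs.simple i * cs.simple i')^m = 1) :
    Phi cs (CoxeterSystem.alternatingWord i i' (2*m)) = 1 := by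
  rw [Phi, lis_alt_split cs i i' m hm, List.map_append, List.prod_append, NN_sq]

lemma isLiftable_FF : M.IsLiftable (FF cs) := by
  intro i j
  rw [← prod_FF_alt cs i j (M i j), prod_map_FF]
  apply SemidirectProduct.ext
  · show Phi cs _ = 1
    exact Phi_alt cs i j (M i j) (cs.simple_mul_simple_pow i j)
  · show cs.wordProd _ = 1
    rw [cs.prod_alternatingWord_eq_mul_pow, if_pos (even_two_mul (M i j))]
    rw [Nat.mul_div_cancel_left _ (by norm_num : 0 < 2), one_mul,
      cs.simple_mul_simple_pow i j]

def theta : W →* GG W := cs.lift ⟨FF cs, isLiftable_FF cs⟩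

lemma theta_wordProd (ω : List B) :
    theta cs (cs.wordProd ω) = (⟨Phi cs ω, cs.wordProd ω⟩ : GG W) := by
  rw [← prod_map_FF]
  have h1 : cs.wordProd ω = (ω.map cs.simple).prod := rfl
  rw [h1, map_list_prod (theta cs), List.map_map]
  congr 1
  refine List.map_congr_left fun a _ => ?_
  show theta cs (cs.simple a) = FF cs a
  exact cs.lift_apply_simple (isLiftable_FF cs) a

lemma Phi_eq {ω ω' : List B} (h : cs.wordProd ω = cs.wordProd ω') :
    Phi cs ω = Phi cs ω' := by
  have h1 := theta_wordProd cs ω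
  have h2 := theta_wordProd cs ω'
  rw [h] at h1
  rw [h2] at h1
  exact congrArg SemidirectProduct.left h1.symm

lemma prod_dd_of_not_mem {L : List W} {t : W} (h : t ∉ L) : ((L.map dd).prod) t = 1 := by
  induction L with
  | nil => rfl
  | cons u L ih =>
    rw [List.map_cons, List.prod_cons]
    show dd u t * (L.map dd).prod t = 1
    have ht : t ≠ u := fun hc => h (hc ▸ List.mem_cons_self)
    rw [dd, if_neg ht, one_mul]
    exact ih (fun hc => h (List.mem_cons_of_mem u hc))

lemma Phi_apply_not_mem {ω : List B} {t : W} (h : t ∉ cs.leftInvSeq ω) :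
    Phi cs ω t = 1 :=
  prod_dd_of_not_mem h

/-- strong exchange property, simple reflection version -/
lemma mem_leftInvSeq_of_lt (a : B) (ω : List B)
    (h : cs.length (cs.simple a * cs.wordProd ω) < cs.length (cs.wordProd ω)) :
    cs.simple a ∈ cs.leftInvSeq ω := by
  by_contra hmem
  obtain ⟨ω', hred', hprod'⟩ := cs.exists_reduced_word' (cs.simple a * cs.wordProd ω)
  have hpp : cs.wordProd (a :: ω') = cs.wordProd ω := by
    rw [cs.wordProd_cons, ← hprod', cs.simple_mul_simple_cancel_left]
  have h1 : Phi cs (a :: ω') (cs.simple a) = Phi cs ω (cs.simple a) :=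
    congrFun (Phi_eq cs hpp) _
  rw [Phi_cons] at h1
  have h2 : (dd (cs.simple a) * conjAut (cs.simple a) (Phi cs ω')) (cs.simple a)
      = Multiplicative.ofAdd 1 * Phi cs ω' (cs.simple a) := by
    show dd (cs.simple a) (cs.simple a) * Phi cs ω' ((cs.simple a)⁻¹ * cs.simple a * cs.simple a) = _
    rw [dd, if_pos rfl, inv_mul_cancel, one_mul]
  rw [h2, Phi_apply_not_mem cs hmem] at h1
  have h3 : Phi cs ω' (cs.simple a) = Multiplicative.ofAdd 1 := by
    have : ∀ x : Multiplicative (ZMod 2), Multiplicative.ofAdd 1 * x = 1 → x = Multiplicative.ofAdd 1 := by decide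
    exact this _ h1
  have h4 : cs.simple a ∈ cs.leftInvSeq ω' := by
    by_contra hc
    rw [Phi_apply_not_mem cs hc] at h3
    exact absurd h3.symm (by decide)
  have h5 := (cs.isLeftInversion_of_mem_leftInvSeq hred' h4).2
  rw [← hprod', cs.simple_mul_simple_cancel_left] at h5
  omega

lemma exchange (a : B) (ω : List B)
    (h : cs.length (cs.simple a * cs.wordProd ω) < cs.length (cs.wordProd ω)) :
    ∃ j, j < ω.length ∧ cs.simple a * cs.wordProd ω = cs.wordProd (ω.eraseIdx j) := by
  obtain ⟨j, hj, hja⟩ := List.mem_iff_getElem.mp (mem_leftInvSeq_of_lt cs a ω h)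
  rw [cs.length_leftInvSeq] at hj
  refine ⟨j, hj, ?_⟩
  rw [← cs.getD_leftInvSeq_mul_wordProd ω j]
  congr 1
  rw [List.getD_eq_getElem _ 1 (by rwa [cs.length_leftInvSeq]), hja]


/-- deletion: every word has a reduced sublist with the same product -/
lemma exists_reduced_sublist (ω : List B) :
    ∃ τ : List B, τ.Sublist ω ∧ cs.IsReduced τ ∧ cs.wordProd τ = cs.wordProd ω := by
  induction ω with
  | nil => exact ⟨[], List.Sublist.refl _, by simp [CoxeterSystem.IsReduced], rfl⟩
  | cons a ω ih =>
    obtain ⟨τ, hsub, hred, hprod⟩ := ih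
    rcases cs.length_simple_mul (cs.wordProd τ) a with hp | hm
    · refine ⟨a :: τ, hsub.cons_cons a, ?_, ?_⟩
      · show cs.length (cs.wordProd (a :: τ)) = (a :: τ).length
        rw [cs.wordProd_cons, hp, hred]
        simp
      · rw [cs.wordProd_cons, cs.wordProd_cons, hprod]
    · have hlt : cs.length (cs.simple a * cs.wordProd τ) < cs.length (cs.wordProd τ) := by
        omega
      obtain ⟨j, hj, hje⟩ := exchange cs a τ hlt
      refine ⟨τ.eraseIdx j, ((τ.eraseIdx_sublist j).trans hsub).cons a, ?_, ?_⟩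
      · show cs.length (cs.wordProd (τ.eraseIdx j)) = (τ.eraseIdx j).length
        rw [← hje, List.length_eraseIdx_of_lt hj]
        have := hred
        rw [CoxeterSystem.IsReduced] at this
        omega
      · rw [← hje, cs.wordProd_cons, hprod]

variable (I : Set B)

/-- elements of the parabolic subgroup have words over I -/
lemma exists_word_over (u : W)
    (hu : u ∈ Subgroup.closure (cs.simple '' I)) :
    ∃ ω : List B, (∀ b ∈ ω, b ∈ I) ∧ cs.wordProd ω = u := by
  induction hu using Subgroup.closure_induction with
  | mem x hx =>
    obtain ⟨b, hb, rfl⟩ := hx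
    exact ⟨[b], by simpa using hb, by simp [cs.wordProd_cons]⟩
  | one => exact ⟨[], by simp, rfl⟩
  | mul x y hx hy ihx ihy =>
    obtain ⟨ωx, hωx, hpx⟩ := ihx
    obtain ⟨ωy, hωy, hpy⟩ := ihy
    refine ⟨ωx ++ ωy, ?_, by rw [cs.wordProd_append, hpx, hpy]⟩
    intro b hb
    rcases List.mem_append.mp hb with h | h
    · exact hωx b h
    · exact hωy b h
  | inv x hx ihx =>
    obtain ⟨ω, hω, hp⟩ := ihx
    exact ⟨ω.reverse, fun b hb => hω b (List.mem_reverse.mp hb),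
      by rw [cs.wordProd_reverse, hp]⟩

/-- a single simple reflection lying in the parabolic has its index in I -/
lemma index_mem_of_simple_eq_word {a : B} {ω : List B} (hω : ∀ b ∈ ω, b ∈ I)
    (h : cs.wordProd ω = cs.simple a) : a ∈ I := by
  obtain ⟨τ, hsub, hred, hprod⟩ := exists_reduced_sublist cs ω
  rw [h] at hprod
  have hlen : τ.length = 1 := by
    have h1 := hred
    rw [CoxeterSystem.IsReduced, hprod, cs.length_simple] at h1
    omega
  obtain ⟨c, rfl⟩ := List.length_eq_one_iff.mp hlen
  have hc : cs.simple c = cs.simple a := by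
    rw [← hprod, cs.wordProd_cons, cs.wordProd_nil, mul_one]
  have hca : c = a := simple_injective cs hc
  exact hca ▸ hω c (hsub.subset (List.mem_singleton_self c))

/-- support lemma: every reduced word of an element of W_I has letters in I -/
lemma letters_mem_of_mem_parabolic :
    ∀ (l : List B) (u : W), u ∈ Subgroup.closure (cs.simple '' I) →
      cs.wordProd l = u → cs.IsReduced l → ∀ a ∈ l, a ∈ I := by
  intro l
  induction l with
  | nil => intro u _ _ _ a ha; cases ha
  | cons a l ih =>
    intro u hu hprod hred b hb
    -- u has a reduced word over I
    obtain ⟨ω₀, hω₀, hp₀⟩ := exists_word_over cs I u hu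
    obtain ⟨ω, hsubω, hredω, hpω⟩ := exists_reduced_sublist cs ω₀
    have hωI : ∀ c ∈ ω, c ∈ I := fun c hc => hω₀ c (hsubω.subset hc)
    rw [hp₀] at hpω
    -- ℓ(s_a * u) < ℓ(u)
    have hlu : cs.length u = (a :: l).length := by rw [← hprod]; exact hred
    have hlred : cs.IsReduced l := by
      have := CoxeterSystem.IsReduced.drop hred 1
      simpa using this
    have hlprod : cs.wordProd l = cs.simple a * u := by
      rw [← hprod, cs.wordProd_cons, cs.simple_mul_simple_cancel_left]
    have hlt : cs.length (cs.simple a * u) < cs.length u := by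
      have h1 : cs.length (cs.simple a * u) = l.length := by
        rw [← hlprod]; exact hlred
      rw [h1, hlu]
      simp
    -- exchange on ω
    have hlt' : cs.length (cs.simple a * cs.wordProd ω) < cs.length (cs.wordProd ω) := by
      rwa [hpω]
    obtain ⟨j, hj, hje⟩ := exchange cs a ω hlt'
    -- a ∈ I
    have haI : a ∈ I := by
      have hword : cs.wordProd (ω.eraseIdx j ++ ω.reverse) = cs.simple a := by
        rw [cs.wordProd_append, ← hje, cs.wordProd_reverse, mul_assoc,
          mul_inv_cancel, mul_one]
      exact index_mem_of_simple_eq_word cs I (fun c hc => by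
        rcases List.mem_append.mp hc with h | h
        · exact hωI c ((ω.eraseIdx_sublist j).subset h)
        · exact hωI c (List.mem_reverse.mp h)) hword
    rcases List.mem_cons.mp hb with rfl | hbl
    · exact haI
    · -- apply IH to s_a * u
      have hmem : cs.simple a * u ∈ Subgroup.closure (cs.simple '' I) := by
        apply Subgroup.mul_mem
        · exact Subgroup.subset_closure ⟨a, haI, rfl⟩
        · exact hu
      exact ih (cs.simple a * u) hmem hlprod hlred b hbl

end CoxAux

end

open CoxeterSystem

variable {B W : Type*} [Group W] {M : CoxeterMatrix B} (cs : CoxeterSystem M W)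

/-- `l` is a reduced word for `w`. -/
def IsReducedWordOf (w : W) (l : List B) : Prop :=
  cs.wordProd l = w ∧ cs.IsReduced l

/-- Bruhat order on `W`, characterized by the subword property. -/
def BruhatLe (u v : W) : Prop :=
  ∃ l l' : List B, IsReducedWordOf cs v l ∧ l'.Sublist l ∧ cs.wordProd l' = u

/-- The standard parabolic subgroup `W_I` generated by the simple reflections in `I`. -/
def parabolicSubgroup (I : Set B) : Subgroup W :=
  Subgroup.closure (cs.simple '' I)

/-- `w` is a minimal-length representative of the coset `w W_I`,
i.e. `w ∈ W^I`. -/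
def IsMinRep (I : Set B) (w : W) : Prop :=
  ∀ v : W, w⁻¹ * v ∈ parabolicSubgroup cs I → cs.length w ≤ cs.length v


section MainAux

lemma lenTwo {s t : B} (hne : cs.simple s * cs.simple t ≠ cs.simple t * cs.simple s) :
    cs.length (cs.simple s * cs.simple t) = 2 := by
  have hle : cs.length (cs.simple s * cs.simple t) ≤ 2 := by
    have := cs.length_mul_le (cs.simple s) (cs.simple t)
    simpa [cs.length_simple] using this
  have hmod := cs.length_mul_mod_two (cs.simple s) (cs.simple t)
  rw [cs.length_simple, cs.length_simple] at hmod
  have hne0 : cs.length (cs.simple s * cs.simple t) ≠ 0 := by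
    intro h0
    apply hne
    have h1 : cs.simple s * cs.simple t = 1 := cs.length_eq_zero_iff.mp h0
    have h2 : cs.simple s = cs.simple t := by
      have := mul_eq_one_iff_eq_inv.mp h1
      rwa [cs.inv_simple] at this
    rw [h2]
  omega

lemma eq_simple_of_mul_eq_one {i j : B} (h : cs.simple i * cs.simple j = 1) :
    cs.simple i = cs.simple j := by
  have := mul_eq_one_iff_eq_inv.mp h
  rwa [cs.inv_simple] at this

lemma minrep_pair {I : Set B} {s t : B} (ht : t ∉ I)
    (hne : cs.simple s * cs.simple t ≠ cs.simple t * cs.simple s) :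
    IsMinRep cs I (cs.simple s * cs.simple t) := by
  intro v hv
  rw [lenTwo cs hne]
  by_contra hlt
  push_neg at hlt
  have hv' : (cs.simple s * cs.simple t)⁻¹ * v ∈ Subgroup.closure (cs.simple '' I) := hv
  have hu : (cs.simple s * cs.simple t)⁻¹ * v = cs.simple t * cs.simple s * v := by
    rw [mul_inv_rev, cs.inv_simple, cs.inv_simple]
  rcases (by omega : cs.length v = 0 ∨ cs.length v = 1) with hlv | hlv
  · -- v = 1
    have hv1 : v = 1 := cs.length_eq_zero_iff.mp hlv
    have hw : cs.wordProd [t, s] = (cs.simple s * cs.simple t)⁻¹ * v := by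
      rw [hu, hv1, mul_one, cs.wordProd_cons, cs.wordProd_cons, cs.wordProd_nil, mul_one]
    have hred : cs.IsReduced [t, s] := by
      show cs.length (cs.wordProd [t,s]) = _
      rw [hw, hv1, mul_one, cs.length_inv, lenTwo cs hne]
      rfl
    exact ht (CoxAux.letters_mem_of_mem_parabolic cs I [t, s] _ hv' hw hred t
      List.mem_cons_self)
  · -- v = simple r
    obtain ⟨r, hvr⟩ := cs.length_eq_one_iff.mp hlv
    have hw3 : cs.wordProd [t, s, r] = (cs.simple s * cs.simple t)⁻¹ * v := by
      rw [hu, hvr]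
      simp [cs.wordProd_cons, cs.wordProd_nil, mul_assoc]
    have hupar : cs.length ((cs.simple s * cs.simple t)⁻¹ * v) % 2 = 1 := by
      rw [cs.length_mul_mod_two, cs.length_inv, lenTwo cs hne, hlv]
    have hule : cs.length ((cs.simple s * cs.simple t)⁻¹ * v) ≤ 3 := by
      have := cs.length_wordProd_le [t, s, r]
      rw [hw3] at this
      simpa using this
    rcases (by omega : cs.length ((cs.simple s * cs.simple t)⁻¹ * v) = 3
        ∨ cs.length ((cs.simple s * cs.simple t)⁻¹ * v) = 1) with h3 | h1
    · have hred : cs.IsReduced [t, s, r] := by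
        show cs.length (cs.wordProd [t,s,r]) = _
        rw [hw3, h3]
        rfl
      exact ht (CoxAux.letters_mem_of_mem_parabolic cs I [t, s, r] _ hv' hw3 hred t
        List.mem_cons_self)
    · obtain ⟨τ, hsubτ, hredτ, hprodτ⟩ := CoxAux.exists_reduced_sublist cs [t, s, r]
      rw [hw3] at hprodτ
      have hlenτ : τ.length = 1 := by
        have h4 := hredτ
        rw [CoxeterSystem.IsReduced, hprodτ, h1] at h4
        omega
      obtain ⟨d, rfl⟩ := List.length_eq_one_iff.mp hlenτ
      have hd : cs.simple d = (cs.simple s * cs.simple t)⁻¹ * v := by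
        rw [← hprodτ, cs.wordProd_cons, cs.wordProd_nil, mul_one]
      have hdI : d ∈ I := CoxAux.letters_mem_of_mem_parabolic cs I [d] _ hv'
        (by rw [cs.wordProd_cons, cs.wordProd_nil, mul_one, hd]) (by
          show cs.length (cs.wordProd [d]) = _
          rw [cs.wordProd_cons, cs.wordProd_nil, mul_one, cs.length_simple]
          rfl) d (List.mem_singleton_self d)
      have hdmem : d ∈ [t, s, r] := hsubτ.subset (List.mem_singleton_self d)
      have hueq : cs.simple d = cs.simple t * cs.simple s * cs.simple r := by
        rw [hd, hu, hvr, mul_assoc]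
      simp only [List.mem_cons, List.mem_singleton, List.not_mem_nil, or_false] at hdmem
      rcases hdmem with h | h | h
      · exact ht (h ▸ hdI)
      · -- d = s : simple r = simple s * simple t * simple s
        rw [h] at hueq
        have h5 : cs.simple t * (cs.simple s * cs.simple r) = cs.simple s := by
          rw [← mul_assoc]; exact hueq.symm
        have h6 : cs.simple s * cs.simple r = cs.simple t * cs.simple s := by
          calc cs.simple s * cs.simple r
              = cs.simple t * (cs.simple t * (cs.simple s * cs.simple r)) :=
                (cs.simple_mul_simple_cancel_left t).symm
            _ = cs.simple t * cs.simple s := by rw [h5]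
        have hr : cs.simple r = cs.simple s * cs.simple t * cs.simple s := by
          calc cs.simple r = cs.simple s * (cs.simple s * cs.simple r) :=
                (cs.simple_mul_simple_cancel_left s).symm
            _ = cs.simple s * (cs.simple t * cs.simple s) := by rw [h6]
            _ = cs.simple s * cs.simple t * cs.simple s := by rw [mul_assoc]
        have hw2 : cs.wordProd [s, t, s] = cs.simple r := by
          rw [hr]
          simp [cs.wordProd_cons, cs.wordProd_nil, mul_assoc]
        obtain ⟨τ₂, hsub₂, hred₂, hprod₂⟩ := CoxAux.exists_reduced_sublist cs [s, t, s]
        rw [hw2] at hprod₂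
        have hlen₂ : τ₂.length = 1 := by
          have h4 := hred₂
          rw [CoxeterSystem.IsReduced, hprod₂, cs.length_simple] at h4
          omega
        obtain ⟨e, rfl⟩ := List.length_eq_one_iff.mp hlen₂
        have he : cs.simple e = cs.simple r := by
          rw [← hprod₂, cs.wordProd_cons, cs.wordProd_nil, mul_one]
        have hemem : e ∈ [s, t, s] := hsub₂.subset (List.mem_singleton_self e)
        simp only [List.mem_cons, List.mem_singleton, List.not_mem_nil, or_false] at hemem
        apply hne
        have hcasework : cs.simple e = cs.simple s ∨ cs.simple e = cs.simple t := by
          rcases hemem with h9 | h9 | h9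
          · exact Or.inl (by rw [h9])
          · exact Or.inr (by rw [h9])
          · exact Or.inl (by rw [h9])
        rcases hcasework with h9 | h9
        · -- simple s = simple r, derive t s = 1
          have h6 : cs.simple s = cs.simple s * cs.simple t * cs.simple s :=
            h9.symm.trans (he.trans hr)
          have h8 := congrArg (fun x => cs.simple s * x) h6
          simp only [← mul_assoc, cs.simple_mul_simple_self, one_mul] at h8
          rw [eq_simple_of_mul_eq_one cs h8.symm]
        · -- simple t = simple r
          have h6 : cs.simple t = cs.simple s * cs.simple t * cs.simple s :=
            h9.symm.trans (he.trans hr)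
          have h8 : cs.simple t * cs.simple s = cs.simple s * cs.simple t := by
            calc cs.simple t * cs.simple s
                = (cs.simple s * cs.simple t * cs.simple s) * cs.simple s := by rw [← h6]
              _ = cs.simple s * cs.simple t := by
                  rw [mul_assoc, cs.simple_mul_simple_self, mul_one]
          exact h8.symm
      · -- d = r : then t s = 1
        rw [h] at hueq
        have h9 : cs.simple t * cs.simple s = 1 := by
          calc cs.simple t * cs.simple s
              = cs.simple t * cs.simple s * cs.simple r * cs.simple r := by
                rw [mul_assoc (cs.simple t * cs.simple s), cs.simple_mul_simple_self, mul_one]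
            _ = cs.simple r * cs.simple r := by rw [← hueq]
            _ = 1 := cs.simple_mul_simple_self r
        apply hne
        rw [eq_simple_of_mul_eq_one cs h9]

lemma wordProd_comm_all {a : B} {m : List B}
    (h : ∀ b ∈ m, cs.simple a * cs.simple b = cs.simple b * cs.simple a) :
    cs.wordProd m * cs.simple a = cs.simple a * cs.wordProd m := by
  induction m with
  | nil => simp [cs.wordProd_nil]
  | cons c m ih =>
    rw [cs.wordProd_cons, mul_assoc, ih (fun b hb => h b (List.mem_cons_of_mem c hb)),
      ← mul_assoc, ← h c List.mem_cons_self, mul_assoc]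

lemma erase_of_comm (l : List B) (i : ℕ) (hi : i < l.length)
    (hcomm : ∀ b ∈ l.drop (i+1),
      cs.simple l[i] * cs.simple b = cs.simple b * cs.simple l[i]) :
    cs.wordProd l * cs.simple l[i] = cs.wordProd (l.eraseIdx i) := by
  have hdrop : l.drop i = l[i] :: l.drop (i+1) := List.drop_eq_getElem_cons hi
  calc cs.wordProd l * cs.simple l[i]
      = cs.wordProd (l.take i ++ l.drop i) * cs.simple l[i] := by
        rw [List.take_append_drop]
    _ = cs.wordProd (l.take i) * (cs.simple l[i] *
          (cs.wordProd (l.drop (i+1)) * cs.simple l[i])) := by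
        rw [hdrop, cs.wordProd_append, cs.wordProd_cons, mul_assoc, mul_assoc]
    _ = cs.wordProd (l.take i) * (cs.simple l[i] *
          (cs.simple l[i] * cs.wordProd (l.drop (i+1)))) := by
        rw [wordProd_comm_all cs hcomm]
    _ = cs.wordProd (l.take i) * cs.wordProd (l.drop (i+1)) := by
        rw [cs.simple_mul_simple_cancel_left]
    _ = cs.wordProd (l.eraseIdx i) := by
        rw [← cs.wordProd_append, List.eraseIdx_eq_take_drop_succ]

lemma exists_noncomm {I : Set B} {w : W} (hw : IsMinRep cs I w) {l : List B}
    (hred : IsReducedWordOf cs w l) (i : ℕ) (hi : i < l.length) (hiI : l[i] ∈ I) :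
    ∃ j, ∃ _ : j < l.length, i < j ∧
      cs.simple l[i] * cs.simple l[j] ≠ cs.simple l[j] * cs.simple l[i] := by
  by_contra hcon
  push_neg at hcon
  have hcomm : ∀ b ∈ l.drop (i+1),
      cs.simple l[i] * cs.simple b = cs.simple b * cs.simple l[i] := by
    intro b hb
    obtain ⟨jj, hjj, hjb⟩ := List.mem_iff_getElem.mp hb
    have hjj' : i + 1 + jj < l.length := by
      rw [List.length_drop] at hjj
      omega
    have : b = l[i + 1 + jj] := by rw [← hjb, List.getElem_drop]
    subst this
    exact hcon (i+1+jj) hjj' (by omega)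
  have herase := erase_of_comm cs l i hi hcomm
  have hlen1 : cs.length (w * cs.simple l[i]) < cs.length w := by
    have h2 : cs.length (w * cs.simple l[i]) ≤ l.length - 1 := by
      rw [← hred.1, herase]
      have := cs.length_wordProd_le (l.eraseIdx i)
      rwa [List.length_eraseIdx_of_lt hi] at this
    have h3 : cs.length w = l.length := by rw [← hred.1]; exact hred.2
    omega
  have hmem : w⁻¹ * (w * cs.simple l[i]) ∈ parabolicSubgroup cs I := by
    rw [inv_mul_cancel_left]
    exact Subgroup.subset_closure ⟨l[i], hiI, rfl⟩
  exact absurd (hw _ hmem) (by omega)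

lemma part2 (I : Set B) (w : W) (hw : IsMinRep cs I w) (l : List B) (i : Fin l.length)
    (hred : IsReducedWordOf cs w l) (hiI : l.get i ∈ I)
    (hnot : ∀ j : Fin l.length, i < j → l.get j ∉ I) :
    ∃ j : Fin l.length, i < j ∧
      cs.simple (l.get i) * cs.simple (l.get j)
        ≠ cs.simple (l.get j) * cs.simple (l.get i) ∧
      cs.length (cs.simple (l.get i) * cs.simple (l.get j)) = 2 ∧
      IsMinRep cs I (cs.simple (l.get i) * cs.simple (l.get j)) ∧
      BruhatLe cs (cs.simple (l.get i) * cs.simple (l.get j)) w := by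
  have hiI' : l[(i : ℕ)] ∈ I := hiI
  obtain ⟨j, hj, hij, hne⟩ := exists_noncomm cs hw hred (i : ℕ) i.isLt hiI'
  have hget : l.get ⟨j, hj⟩ = l[j] := rfl
  have hgeti : l.get i = l[(i : ℕ)] := rfl
  refine ⟨⟨j, hj⟩, hij, ?_, ?_, ?_, ?_⟩
  · rw [hget, hgeti]; exact hne
  · rw [hget, hgeti]; exact lenTwo cs hne
  · rw [hget, hgeti]
    exact minrep_pair cs (hnot ⟨j, hj⟩ hij) hne
  · refine ⟨l, [l.get i, l.get ⟨j, hj⟩], hred, ?_, ?_⟩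
    · have h1 : l.get ⟨j, hj⟩ ∈ l.drop ((i : ℕ)+1) := by
        apply List.mem_iff_getElem.mpr
        refine ⟨j - ((i:ℕ)+1), by rw [List.length_drop]; omega, ?_⟩
        rw [List.getElem_drop]
        congr 1
        omega
      have h2 : [l.get i, l.get ⟨j, hj⟩].Sublist (l[(i:ℕ)] :: l.drop ((i:ℕ)+1)) := by
        rw [hgeti]
        exact (List.singleton_sublist.mpr h1).cons₂ _
      have h3 : l[(i:ℕ)] :: l.drop ((i:ℕ)+1) = l.drop (i : ℕ) :=
        (List.drop_eq_getElem_cons i.isLt).symm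
      exact (h3 ▸ h2).trans (List.drop_sublist _ _)
    · rw [cs.wordProd_cons, cs.wordProd_cons, cs.wordProd_nil, mul_one]

end MainAux

/-- Let `w ∈ W^I` be fully supported (`S(w) = S`) with `I` nonempty.  Then
there exist simple reflections `s, t ∈ S` with `s ∈ I` such that `st` has length `2`, is a
minimal-length coset representative, and `st ≤ w` in Bruhat order.  Concretely, for any
reduced word `w = s₁⋯s_k`, if `i` is the largest index with `s_i ∈ I`, then there is `j > i`
such that `s_i` and `s_j` do not commute, and `s = s_i`, `t = s_j` work. -/
theorem exists_st_in_interval (I : Set B) (w : W) (hw : IsMinRep cs I w)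
    (hfull : ∀ b : B, BruhatLe cs (cs.simple b) w) (hI : I.Nonempty) :
    (∃ s t : B, s ∈ I ∧ cs.length (cs.simple s * cs.simple t) = 2 ∧
        IsMinRep cs I (cs.simple s * cs.simple t) ∧
        BruhatLe cs (cs.simple s * cs.simple t) w) ∧
      ∀ (l : List B) (i : Fin l.length), IsReducedWordOf cs w l → l.get i ∈ I →
        (∀ j : Fin l.length, i < j → l.get j ∉ I) →
        ∃ j : Fin l.length, i < j ∧
          cs.simple (l.get i) * cs.simple (l.get j)
            ≠ cs.simple (l.get j) * cs.simple (l.get i) ∧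
          cs.length (cs.simple (l.get i) * cs.simple (l.get j)) = 2 ∧
          IsMinRep cs I (cs.simple (l.get i) * cs.simple (l.get j)) ∧
          BruhatLe cs (cs.simple (l.get i) * cs.simple (l.get j)) w := by
  constructor
  · obtain ⟨b, hbI⟩ := hI
    obtain ⟨l₀, l', hred₀, hsub', hprod'⟩ := hfull b
    obtain ⟨τ, hsubτ, hredτ, hprodτ⟩ := CoxAux.exists_reduced_sublist cs l'
    rw [hprod'] at hprodτ
    have hlen1 : τ.length = 1 := by
      have h4 := hredτ
      rw [CoxeterSystem.IsReduced, hprodτ, cs.length_simple] at h4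
      omega
    obtain ⟨c, rfl⟩ := List.length_eq_one_iff.mp hlen1
    have hcb : c = b := CoxAux.simple_injective cs
      (by rw [← hprodτ, cs.wordProd_cons, cs.wordProd_nil, mul_one])
    have hbmem : b ∈ l₀ := hcb ▸ hsub'.subset (hsubτ.subset (List.mem_singleton_self c))
    obtain ⟨p, hp, hpb⟩ := List.mem_iff_getElem.mp hbmem
    classical
    have hSne : (Finset.univ.filter (fun q : Fin l₀.length => l₀.get q ∈ I)).Nonempty := by
      refine ⟨⟨p, hp⟩, ?_⟩
      simp only [Finset.mem_filter, Finset.mem_univ, true_and]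
      show l₀[p] ∈ I
      rw [hpb]
      exact hbI
    set S := Finset.univ.filter (fun q : Fin l₀.length => l₀.get q ∈ I) with hS
    have hiI : l₀.get (S.max' hSne) ∈ I := (Finset.mem_filter.mp (S.max'_mem hSne)).2
    have hnot : ∀ j : Fin l₀.length, S.max' hSne < j → l₀.get j ∉ I := by
      intro j hij hjI
      have hjS : j ∈ S := Finset.mem_filter.mpr ⟨Finset.mem_univ j, hjI⟩
      exact absurd (S.le_max' j hjS) (not_le.mpr hij)
    obtain ⟨j, hij, hne2, hlen2, hmin2, hbr2⟩ :=
      part2 cs I w hw l₀ (S.max' hSne) hred₀ hiI hnot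
    exact ⟨l₀.get (S.max' hSne), l₀.get j, hiI, hlen2, hmin2, hbr2⟩
  · intro l i hred hiI hnot
    exact part2 cs I w hw l i hred hiI hnot
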